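/- arXiv:1911.10077 — 2 statements merged into one kernel-verified Lean document; each statement's English description precedes it below -/
import Mathlib

section
/- There exists an order isomorphism between the real line ℝ with its usual order and the lexicographic product ℤ ×ₗ (ℝ ∪ {∞}), where ℝ ∪ {∞} is the linear order obtained by adjoining a top element ∞ to ℝ, and the lexicographic order compares the integer coordinate first. -/
/-!
Every element of an Archimedean group lies in exactly one translate of `(a, b]` by an integer
multiple of `b - a`; with `(a, b] = (-1, 1]` this gives `ℝ ≃o ℤ ×ₗ (-1, 1]`. The interval `(-1, 1]`
is `WithTop` of its interior `(-1, 1) ≃o ℝ`, the right endpoint playing the role of `⊤`.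
-/
open Set

section Archimedean

variable {α : Type*} [AddCommGroup α] [LinearOrder α] [IsOrderedAddMonoid α] {a b : α}

theorem strictMono_zsmul_add_of_lex_Ioc (h : a < b) :
    StrictMono fun x : ℤ ×ₗ Ioc a b ↦ (ofLex x).1 • (b - a) + ((ofLex x).2 : α) := by
  rintro ⟨m, s⟩ ⟨n, t⟩ hlt
  rcases Prod.Lex.lt_iff.1 hlt with hmn | ⟨rfl, hst⟩
  · have hba : 0 ≤ b - a := (sub_pos.2 h).le
    calc m • (b - a) + s ≤ m • (b - a) + b := by gcongr; exact s.2.2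
      _ = (m + 1) • (b - a) + a := by rw [add_zsmul, one_zsmul]; abel
      _ ≤ n • (b - a) + a := by gcongr; exact hmn
      _ < n • (b - a) + t := by gcongr; exact t.2.1
  · exact add_lt_add_right (Subtype.mk_lt_mk.1 hst) _

theorem surjective_zsmul_add_of_lex_Ioc [Archimedean α] (h : a < b) :
    Function.Surjective fun x : ℤ ×ₗ Ioc a b ↦ (ofLex x).1 • (b - a) + ((ofLex x).2 : α) := by
  intro y
  have hp : 0 < b - a := sub_pos.2 h
  have hmod : toIocMod hp a y ∈ Ioc a b := by
    simpa using toIocMod_mem_Ioc hp a y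
  exact ⟨toLex (toIocDiv hp a y, ⟨_, hmod⟩), toIocDiv_zsmul_sub_toIocMod hp a y⟩

noncomputable def intLexIocOrderIso [Archimedean α] (h : a < b) : ℤ ×ₗ Ioc a b ≃o α :=
  StrictMono.orderIsoOfSurjective _ (strictMono_zsmul_add_of_lex_Ioc h)
    (surjective_zsmul_add_of_lex_Ioc h)

end Archimedean

section WithTop

variable {α : Type*} [LinearOrder α] {a b : α}

def withTopIooToIoc (h : a < b) : WithTop (Ioo a b) → Ioc a b
  | ⊤ => ⟨b, h, le_rfl⟩
  | (x : Ioo a b) => ⟨x, x.2.1, x.2.2.le⟩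

theorem strictMono_withTopIooToIoc (h : a < b) : StrictMono (withTopIooToIoc h) := by
  rintro (_ | x) (_ | y) hxy
  · exact absurd hxy (lt_irrefl _)
  · exact absurd hxy not_top_lt
  · exact x.2.2
  · exact Subtype.mk_lt_mk.2 (WithTop.coe_lt_coe.1 hxy : x < y)

theorem surjective_withTopIooToIoc (h : a < b) : Function.Surjective (withTopIooToIoc h) := by
  rintro ⟨y, hay, hyb⟩
  rcases hyb.eq_or_lt with rfl | hyb
  · exact ⟨⊤, rfl⟩
  · exact ⟨(⟨y, hay, hyb⟩ : Ioo a b), rfl⟩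

noncomputable def withTopIooOrderIsoIoc (h : a < b) : WithTop (Ioo a b) ≃o Ioc a b :=
  StrictMono.orderIsoOfSurjective _ (strictMono_withTopIooToIoc h) (surjective_withTopIooToIoc h)

end WithTop

theorem stmt_12 : Nonempty (ℝ ≃o ℤ ×ₗ (WithTop ℝ)) := by
  have h : (-1 : ℝ) < 1 := by norm_num
  exact ⟨(intLexIocOrderIso h).symm.trans <| Prod.Lex.prodLexCongr (OrderIso.refl ℤ) <|
    (withTopIooOrderIsoIoc h).symm.trans (orderIsoIooNegOneOne ℝ).symm.withTopCongr⟩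
end

section
/- Let M be a set, X a set with an equivalence relation E, and suppose given: a function f : X → (Fin k → M); bijections σ₁, σ₂ : M → M; and bijections τ₁, τ₂ : X → X such that for each i ∈ {1,2}, f(τᵢ x) = (fun j => σᵢ (f x j)) for all x ∈ X, and τᵢ respects E (x E y implies τᵢ x E τᵢ y). Assume (a) every m ∈ M with σ₁ m = m satisfies σ₂ m = m; (b) f eliminates E, i.e., for all x, y ∈ X, x E y iff f x = f y; and (c) there exists x₀ ∈ X with τ₁ x₀ E x₀ but not τ₂ x₀ E x₀. Then a contradiction follows (no such data can exist). -/
/-!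
Since `f` eliminates `E`, the class of `x₀` is fixed by `τ₁` exactly when the tuple `f x₀` is fixed
by `σ₁` coordinatewise. Each coordinate is then a fixed point of `σ₁`, hence of `σ₂`, so `f x₀` is
fixed by `σ₂` and the class of `x₀` is fixed by `τ₂` after all.
-/

open Function

theorem Function.comp_eq_self_of_fixedPoints_subset {ι M : Type*} {σ₁ σ₂ : M → M}
    (h : fixedPoints σ₁ ⊆ fixedPoints σ₂) {v : ι → M} (hv : σ₁ ∘ v = v) : σ₂ ∘ v = v :=
  funext fun j => h (congrFun hv j)

theorem stmt_17_general {M X : Type*} (k : ℕ) (E : X → X → Prop)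
    (f : X → Fin k → M) (σ₁ σ₂ : M → M)
    (τ₁ τ₂ : X → X)
    (hcomm₁ : ∀ x : X, f (τ₁ x) = fun j => σ₁ (f x j))
    (hcomm₂ : ∀ x : X, f (τ₂ x) = fun j => σ₂ (f x j))
    (ha : ∀ m : M, σ₁ m = m → σ₂ m = m)
    (hb : ∀ x y : X, E x y ↔ f x = f y)
    (hc : ∃ x₀ : X, E (τ₁ x₀) x₀ ∧ ¬ E (τ₂ x₀) x₀) :
    False := by
  obtain ⟨x₀, hfixed₁, hmoved₂⟩ := hc
  have hσ₁ : σ₁ ∘ f x₀ = f x₀ := (hcomm₁ x₀).symm.trans ((hb _ _).1 hfixed₁)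
  have hσ₂ : σ₂ ∘ f x₀ = f x₀ := comp_eq_self_of_fixedPoints_subset ha hσ₁
  exact hmoved₂ ((hb _ _).2 ((hcomm₂ x₀).trans hσ₂))

theorem stmt_17 {M X : Type*} (k : ℕ) (E : X → X → Prop) (hE : Equivalence E)
    (f : X → Fin k → M) (σ₁ σ₂ : M → M)
    (hσ₁ : Function.Bijective σ₁) (hσ₂ : Function.Bijective σ₂)
    (τ₁ τ₂ : X → X)
    (hτ₁ : Function.Bijective τ₁) (hτ₂ : Function.Bijective τ₂)
    (hcomm₁ : ∀ x : X, f (τ₁ x) = fun j => σ₁ (f x j))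
    (hcomm₂ : ∀ x : X, f (τ₂ x) = fun j => σ₂ (f x j))
    (hresp₁ : ∀ x y : X, E x y → E (τ₁ x) (τ₁ y))
    (hresp₂ : ∀ x y : X, E x y → E (τ₂ x) (τ₂ y))
    (ha : ∀ m : M, σ₁ m = m → σ₂ m = m)
    (hb : ∀ x y : X, E x y ↔ f x = f y)
    (hc : ∃ x₀ : X, E (τ₁ x₀) x₀ ∧ ¬ E (τ₂ x₀) x₀) :
    False :=
  stmt_17_general k E f σ₁ σ₂ τ₁ τ₂ hcomm₁ hcomm₂ ha hb hc
end
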